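/- arXiv:0706.1952 — 2 statements merged into one kernel-verified Lean document; each statement's English description precedes it below -/
import Mathlib

section
/- Let F_q be a finite field, n, m ∈ ℕ with m < q^n, X = {x_1,...,x_m} ⊂ F_q^n a set of m distinct points, > a monomial order, and (u_1,...,u_s) a cleaned kernel basis of ker(Φ_X) ⊆ F_n(F_q) with respect to the monomial function basis (i.e., the coordinate matrix of the u_i is in reduced row echelon form). Then the family (τ_1^q − τ_1,...,τ_n^q − τ_n, φ^{-1}(u_1),...,φ^{-1}(u_s)) is a Gröbner basis of the vanishing ideal I(X) with respect to >. -/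
open MvPolynomial

/-- The leading monomial (multidegree) of a multivariate polynomial with respect to
a monomial order. -/
noncomputable def leadingMonomial {K : Type*} [CommSemiring K] {σ : Type*}
    (m : MonomialOrder σ) (p : MvPolynomial σ K) : σ →₀ ℕ :=
  m.toSyn.symm (p.support.sup m.toSyn)

/-- The family `G` is a Gröbner basis of the ideal `I` with respect to the monomial
order `m`: `G` generates `I` and the leading monomial of every nonzero element of `I`
is divisible by the leading monomial of some nonzero member of the family `G`. -/
def IsGroebnerBasis {K : Type*} [Field K] {σ ι : Type*} (m : MonomialOrder σ)
    (I : Ideal (MvPolynomial σ K)) (G : ι → MvPolynomial σ K) : Prop :=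
  Ideal.span (Set.range G) = I ∧
    ∀ p ∈ I, p ≠ 0 → ∃ i : ι, G i ≠ 0 ∧ leadingMonomial m (G i) ≤ leadingMonomial m p

/-- The vanishing ideal of a subset `X ⊆ K^n`. -/
def vanishingIdeal (K : Type*) [Field K] (n : ℕ) (X : Set (Fin n → K)) :
    Ideal (MvPolynomial (Fin n) K) where
  carrier := {p | ∀ x ∈ X, MvPolynomial.eval x p = 0}
  zero_mem' := by simp
  add_mem' ha hb x hx := by simp [ha x hx, hb x hx]
  smul_mem' c p hp x hx := by simp [smul_eq_mul, hp x hx]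

/-! Divide `f ∈ I(X)` by the field equations and the `p_j`; all leading coefficients are `1`.
The remainder `r` lies in `I(X)`, has exponents `< q`, and avoids the leading monomials of
the `p_j`. Its function lies in `ker Φ_X`, so `r = ∑ c_j p_j`, evaluation being injective on
polynomials with exponents `< q`. The echelon form makes `c_j` the coefficient of `r` at the
leading monomial of `p_j`, hence `c_j = 0` and `r = 0`. So every `f ∈ I(X)` is a combination of
the family whose terms have leading monomials `≼ lm f`, which gives both generation and the
leading monomial condition. -/

/-- `MvPolynomial.eq_zero_of_eval_eq_zero` for variables in `Type`, via `ULift`: the library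
version needs `σ` and `K` in the same universe. -/
theorem MvPolynomial.eq_zero_of_eval_eq_zero_of_mem_restrictDegree {K : Type*} [Field K]
    [Fintype K] {σ : Type} [Finite σ] {p : MvPolynomial σ K}
    (hp : p ∈ restrictDegree σ K (Fintype.card K - 1)) (h : ∀ v, eval v p = 0) : p = 0 := by
  classical
  apply rename_injective _ ULift.up_injective
  rw [map_zero]
  refine eq_zero_of_eval_eq_zero (ULift σ) K _ (fun v => by rw [eval_rename]; exact h _) ?_
  rw [mem_restrictDegree] at hp ⊢
  rw [support_rename_of_injective ULift.up_injective]
  rintro _ hs ⟨i⟩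
  obtain ⟨d, hd, rfl⟩ := Finset.mem_image.1 hs
  rw [Finsupp.mapDomain_apply ULift.up_injective]
  exact hp d hd i

theorem MvPolynomial.mem_restrictDegree_card_sub_one_iff {K σ : Type*} [Field K] [Fintype K]
    {p : MvPolynomial σ K} :
    p ∈ restrictDegree σ K (Fintype.card K - 1) ↔
      ∀ d ∈ p.support, ∀ i, d i < Fintype.card K := by
  simp only [mem_restrictDegree, Nat.le_sub_one_iff_lt Fintype.card_pos]

namespace MonomialOrder

section FieldEquation

variable {R σ : Type*} [CommRing R] [Nontrivial R] (m : MonomialOrder σ) {q : ℕ}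

theorem degree_X_pow (i : σ) : m.degree (X i ^ q : MvPolynomial σ R) = Finsupp.single i q := by
  classical
  rw [X_pow_eq_monomial, degree_monomial, if_neg one_ne_zero]

theorem degree_X_lt_degree_X_pow (hq : 1 < q) (i : σ) :
    m.degree (X i : MvPolynomial σ R) ≺[m] m.degree (X i ^ q : MvPolynomial σ R) := by
  rw [degree_X_pow, degree_X]
  refine m.toSyn_strictMono (lt_of_le_of_ne (Finsupp.single_le_single.2 hq.le) ?_)
  exact (Finsupp.single_injective i).ne hq.ne

theorem degree_X_pow_sub_X (hq : 1 < q) (i : σ) :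
    m.degree (X i ^ q - X i : MvPolynomial σ R) = Finsupp.single i q := by
  rw [degree_sub_of_lt (m.degree_X_lt_degree_X_pow hq i), degree_X_pow]

theorem leadingCoeff_X_pow_sub_X (hq : 1 < q) (i : σ) :
    m.leadingCoeff (X i ^ q - X i : MvPolynomial σ R) = 1 := by
  rw [leadingCoeff_sub_of_lt (m.degree_X_lt_degree_X_pow hq i), X_pow_eq_monomial,
    leadingCoeff_monomial]

end FieldEquation

theorem coeff_degree_sum_smul {R σ κ : Type*} [CommSemiring R] [Fintype κ] (m : MonomialOrder σ)
    {p : κ → MvPolynomial σ R} (hlc : ∀ j, coeff (m.degree (p j)) (p j) = 1)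
    (hrref : ∀ j j', j ≠ j' → coeff (m.degree (p j)) (p j') = 0) (c : κ → R) (j : κ) :
    coeff (m.degree (p j)) (∑ k, c k • p k) = c j := by
  rw [coeff_sum, Finset.sum_eq_single j (fun k _ hk => by rw [coeff_smul, hrref j k hk.symm,
    smul_zero]) (fun h => absurd (Finset.mem_univ j) h), coeff_smul, hlc, smul_eq_mul, mul_one]

theorem exists_degree_le_of_eq_linearCombination {R σ ι : Type*} [CommRing R] [NoZeroDivisors R]
    (m : MonomialOrder σ) {b : ι → MvPolynomial σ R} {g : ι →₀ MvPolynomial σ R}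
    {f : MvPolynomial σ R} (hf : f = Finsupp.linearCombination _ b g)
    (hdeg : ∀ i, m.degree (b i * g i) ≼[m] m.degree f) (hf0 : f ≠ 0) :
    ∃ i, b i ≠ 0 ∧ m.degree (b i) ≤ m.degree f := by
  have hcoeff : f.coeff (m.degree f) ≠ 0 := m.coeff_degree_ne_zero_iff.2 hf0
  nth_rw 2 [hf] at hcoeff
  rw [Finsupp.linearCombination_apply, Finsupp.sum, coeff_sum] at hcoeff
  obtain ⟨i, -, hi⟩ := Finset.exists_ne_zero_of_sum_ne_zero hcoeff
  rw [smul_eq_mul, mul_comm] at hi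
  have hprod : b i * g i ≠ 0 := fun h => hi (by rw [h, coeff_zero])
  have hdeg_eq : m.degree (b i * g i) = m.degree f :=
    m.toSyn.injective (le_antisymm (hdeg i) (m.le_degree (mem_support_iff.2 hi)))
  refine ⟨i, left_ne_zero_of_mul hprod, ?_⟩
  rw [← hdeg_eq, m.degree_mul (left_ne_zero_of_mul hprod) (right_ne_zero_of_mul hprod)]
  exact le_self_add

end MonomialOrder

open scoped MonomialOrder

theorem Ideal.linearCombination_mem {R ι : Type*} [CommSemiring R] {I : Ideal R} {G : ι → R}
    (hG : ∀ i, G i ∈ I) (g : ι →₀ R) : Finsupp.linearCombination R G g ∈ I := by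
  rw [Finsupp.linearCombination_apply]
  exact Submodule.finsuppSum_mem _ _ _ _ fun i _ => I.smul_mem _ (hG i)

theorem isGroebnerBasis_of_forall_eq_linearCombination {K σ ι : Type*} [Field K]
    (m : MonomialOrder σ) {I : Ideal (MvPolynomial σ K)} {G : ι → MvPolynomial σ K}
    (hG : ∀ i, G i ∈ I)
    (hrep : ∀ f ∈ I, ∃ g : ι →₀ MvPolynomial σ K,
      f = Finsupp.linearCombination _ G g ∧ ∀ i, m.degree (G i * g i) ≼[m] m.degree f) :
    IsGroebnerBasis m I G := by
  refine ⟨le_antisymm (Ideal.span_le.2 (Set.range_subset_iff.2 hG)) fun f hf => ?_,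
    fun f hf hf0 => ?_⟩
  · obtain ⟨g, rfl, -⟩ := hrep f hf
    exact Ideal.linearCombination_mem (fun i => Ideal.subset_span (Set.mem_range_self i)) g
  · obtain ⟨g, hfg, hdeg⟩ := hrep f hf
    exact m.exists_degree_le_of_eq_linearCombination hfg hdeg hf0

theorem eq_zero_of_mem_vanishingIdeal_of_coeff_degree_eq_zero {K ι κ : Type*} [Field K]
    [Fintype K] [Fintype κ] {n : ℕ} (m : MonomialOrder (Fin n)) (x : ι → Fin n → K)
    {p : κ → MvPolynomial (Fin n) K}
    (hP : ∀ j, p j ∈ restrictDegree (Fin n) K (Fintype.card K - 1))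
    (hspan : LinearMap.ker (LinearMap.pi fun i => LinearMap.proj (x i) :
        ((Fin n → K) → K) →ₗ[K] (ι → K)) ≤
      Submodule.span K (Set.range fun j y => eval y (p j)))
    (hlc : ∀ j, coeff (m.degree (p j)) (p j) = 1)
    (hrref : ∀ j j', j ≠ j' → coeff (m.degree (p j)) (p j') = 0)
    {r : MvPolynomial (Fin n) K} (hr : r ∈ vanishingIdeal K n (Set.range x))
    (hr_red : r ∈ restrictDegree (Fin n) K (Fintype.card K - 1))
    (hr_deg : ∀ j, coeff (m.degree (p j)) r = 0) : r = 0 := by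
  have hker : (fun y => eval y r) ∈ LinearMap.ker (LinearMap.pi fun i => LinearMap.proj (x i) :
      ((Fin n → K) → K) →ₗ[K] (ι → K)) := by
    ext k
    exact hr (x k) ⟨k, rfl⟩
  obtain ⟨c, hc⟩ := (Submodule.mem_span_range_iff_exists_fun K).1 (hspan hker)
  have hr_eq : r = ∑ j, c j • p j := by
    rw [← sub_eq_zero]
    refine eq_zero_of_eval_eq_zero_of_mem_restrictDegree
      (sub_mem hr_red (sum_mem fun j _ => Submodule.smul_mem _ _ (hP j))) fun v => ?_
    simpa [sub_eq_zero, map_sum] using (congrFun hc v).symm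
  have hc0 : ∀ j, c j = 0 := fun j => by
    rw [← m.coeff_degree_sum_smul hlc hrref c j, ← hr_eq, hr_deg]
  simp [hr_eq, hc0]

/-- `hlc` and `hrref` encode the reduced row echelon form of the cleaned kernel basis. -/
theorem cleaned_kernel_basis_extends_to_groebner_basis_general
    (K : Type*) [Field K] [Fintype K] (n m : ℕ)
    (x : Fin m → (Fin n → K))
    (mo : MonomialOrder (Fin n))
    (p : Fin (Fintype.card K ^ n - m) → MvPolynomial (Fin n) K)
    (hP : ∀ j, ∀ d ∈ (p j).support, ∀ i : Fin n, d i < Fintype.card K)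
    (hspan : Submodule.span K
        (Set.range fun j => (fun y : Fin n → K => MvPolynomial.eval y (p j))) =
      LinearMap.ker (LinearMap.pi (fun i : Fin m => LinearMap.proj (x i)) :
        ((Fin n → K) → K) →ₗ[K] (Fin m → K)))
    (hlc : ∀ j, MvPolynomial.coeff (leadingMonomial mo (p j)) (p j) = 1)
    (hrref : ∀ j j', j ≠ j' → MvPolynomial.coeff (leadingMonomial mo (p j)) (p j') = 0) :
    IsGroebnerBasis mo (vanishingIdeal K n (Set.range x))
      (Sum.elim
        (fun i : Fin n => (X i : MvPolynomial (Fin n) K) ^ Fintype.card K - X i)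
        p) := by
  have hq : 1 < Fintype.card K := Fintype.one_lt_card
  set G := Sum.elim (fun i : Fin n => (X i : MvPolynomial (Fin n) K) ^ Fintype.card K - X i) p
  set I := vanishingIdeal K n (Set.range x)
  have hG_mem : ∀ i, G i ∈ I := by
    rintro (i | j) _ ⟨k, rfl⟩
    · simp [G, FiniteField.pow_card]
    · have hpj : (fun y => eval y (p j)) ∈ Submodule.span K
          (Set.range fun j => (fun y : Fin n → K => eval y (p j))) :=
        Submodule.subset_span ⟨j, rfl⟩
      rw [hspan] at hpj
      exact congrFun (LinearMap.mem_ker.1 hpj) k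
  have hG_lc : ∀ i, IsUnit (mo.leadingCoeff (G i)) := by
    rintro (i | j)
    · simp [G, mo.leadingCoeff_X_pow_sub_X hq]
    · rw [show mo.leadingCoeff (G (.inr j)) = 1 from hlc j]
      exact isUnit_one
  refine isGroebnerBasis_of_forall_eq_linearCombination mo hG_mem fun f hf => ?_
  obtain ⟨g, r, hfr, hdeg, hr⟩ := mo.div hG_lc f
  suffices r = 0 from ⟨g, by rw [hfr, this, add_zero], hdeg⟩
  refine eq_zero_of_mem_vanishingIdeal_of_coeff_degree_eq_zero mo x
    (fun j => mem_restrictDegree_card_sub_one_iff.2 (hP j)) hspan.ge hlc hrref ?_ ?_ ?_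
  · rw [eq_sub_of_add_eq' hfr.symm]
    exact sub_mem hf (Ideal.linearCombination_mem hG_mem g)
  · refine mem_restrictDegree_card_sub_one_iff.2 fun d hd i => ?_
    simpa [G, mo.degree_X_pow_sub_X hq, Finsupp.single_le_iff] using hr d hd (.inl i)
  · exact fun j => by_contra fun h => hr _ (mem_support_iff.2 h) (.inr j) le_rfl

/-- Extending a cleaned kernel basis of `ker Φ_X` by the field equations
`τ_i^q − τ_i` yields a Gröbner basis of the vanishing ideal `I(X)`.
A cleaned kernel basis is given here by polynomials `p_1, …, p_s ∈ P_q^n` whose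
associated functions form a basis of `ker Φ_X`, each with leading coefficient `1`,
and such that the leading monomial of `p_j` does not occur in `p_{j'}` for `j' ≠ j`
(the reduced row echelon form condition). -/
theorem cleaned_kernel_basis_extends_to_groebner_basis
    (K : Type*) [Field K] [Fintype K] (n m : ℕ) (hm : m < Fintype.card K ^ n)
    (x : Fin m → (Fin n → K)) (hx : Function.Injective x)
    (mo : MonomialOrder (Fin n))
    (p : Fin (Fintype.card K ^ n - m) → MvPolynomial (Fin n) K)
    (hP : ∀ j, ∀ d ∈ (p j).support, ∀ i : Fin n, d i < Fintype.card K)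
    (hindep : LinearIndependent K
      (fun j => (fun y : Fin n → K => MvPolynomial.eval y (p j))))
    (hspan : Submodule.span K
        (Set.range fun j => (fun y : Fin n → K => MvPolynomial.eval y (p j))) =
      LinearMap.ker (LinearMap.pi (fun i : Fin m => LinearMap.proj (x i)) :
        ((Fin n → K) → K) →ₗ[K] (Fin m → K)))
    (hlc : ∀ j, MvPolynomial.coeff (leadingMonomial mo (p j)) (p j) = 1)
    (hrref : ∀ j j', j ≠ j' → MvPolynomial.coeff (leadingMonomial mo (p j)) (p j') = 0) :
    IsGroebnerBasis mo (vanishingIdeal K n (Set.range x))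
      (Sum.elim
        (fun i : Fin n => (X i : MvPolynomial (Fin n) K) ^ Fintype.card K - X i)
        p) :=
  cleaned_kernel_basis_extends_to_groebner_basis_general K n m x mo p hP hspan hlc hrref
end

section
/- Let F_q be a finite field, m < q^n, X = {x_1,...,x_m} ⊂ F_q^n distinct points, > a monomial order, (u_1,...,u_s) a cleaned kernel basis of ker(Φ_X), and (u_1,...,u_d) its standard orthonormal extension defining a symmetric bilinear form with ⟨u_i,u_j⟩ = δ_ij on F_n(F_q). Let f ∈ F_q[τ_1,...,τ_n] be any polynomial, b_i := f(x_i), U any Gröbner basis of I(X) with respect to >, and v* the unique orthogonal solution of Φ_X(g) = b. Then the normal form of f with respect to U equals φ^{-1}(v*): f̄^U = φ^{-1}(v*). -/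
open MvPolynomial

/-- **Main theorem.** Let `X = {x_1, …, x_m} ⊂ K^n` be `m < q^n` distinct points,
`mo` a monomial order, `(p_1, …, p_s)` a cleaned kernel basis of `ker Φ_X`
(written via the corresponding polynomials in `P_q^n`), and `B` the symmetric
bilinear form obtained from the standard orthonormalization (the extended basis
consisting of the kernel basis functions together with the monomial functions for
the non-pivot multi-indices is declared orthonormal).  Let `f` be any polynomial,
`b_i := f(x_i)`, `U` a Gröbner basis of the vanishing ideal `I(X)` with respect to
`mo`, `v*` the (unique) orthogonal solution of `Φ_X(g) = b`, and `r = f̄^U` the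
normal form of `f` with respect to `U` (i.e. `f − r ∈ I(X)` and no term of `r` is
divisible by the leading monomial of a nonzero element of `U`).
Then `f̄^U = φ⁻¹(v*)`, i.e. the function associated to `r` is `v*` and `r ∈ P_q^n`. -/
theorem normal_form_eq_orthogonal_solution
    (K : Type*) [Field K] [Fintype K] (n m : ℕ) (hm : m < Fintype.card K ^ n)
    (x : Fin m → (Fin n → K)) (hx : Function.Injective x)
    (mo : MonomialOrder (Fin n))
    -- the cleaned kernel basis `(u_1, …, u_s)`, given by polynomials `p j ∈ P_q^n`
    (p : Fin (Fintype.card K ^ n - m) → MvPolynomial (Fin n) K)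
    (hP : ∀ j, ∀ d ∈ (p j).support, ∀ i : Fin n, d i < Fintype.card K)
    (hindep : LinearIndependent K
      (fun j => (fun y : Fin n → K => MvPolynomial.eval y (p j))))
    (hspan : Submodule.span K
        (Set.range fun j => (fun y : Fin n → K => MvPolynomial.eval y (p j))) =
      LinearMap.ker (LinearMap.pi (fun i : Fin m => LinearMap.proj (x i)) :
        ((Fin n → K) → K) →ₗ[K] (Fin m → K)))
    (hlc : ∀ j, MvPolynomial.coeff (leadingMonomial mo (p j)) (p j) = 1)
    (hrref : ∀ j j', j ≠ j' → MvPolynomial.coeff (leadingMonomial mo (p j)) (p j') = 0)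
    -- the symmetric bilinear form of the standard orthonormalization
    (B : ((Fin n → K) → K) →ₗ[K] ((Fin n → K) → K) →ₗ[K] K)
    (hBsymm : ∀ u v : (Fin n → K) → K, B u v = B v u)
    (hB₁ : ∀ j j', B (fun y => MvPolynomial.eval y (p j))
        (fun y => MvPolynomial.eval y (p j')) = if j = j' then 1 else 0)
    (hB₂ : ∀ j, ∀ α : Fin n →₀ ℕ, (∀ i, α i < Fintype.card K) →
      (∀ j', α ≠ leadingMonomial mo (p j')) →
      B (fun y => MvPolynomial.eval y (p j))
        (fun y => MvPolynomial.eval y (MvPolynomial.monomial α (1 : K))) = 0)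
    (hB₃ : ∀ α β : Fin n →₀ ℕ, (∀ i, α i < Fintype.card K) →
      (∀ i, β i < Fintype.card K) →
      (∀ j, α ≠ leadingMonomial mo (p j)) → (∀ j, β ≠ leadingMonomial mo (p j)) →
      B (fun y => MvPolynomial.eval y (MvPolynomial.monomial α (1 : K)))
        (fun y => MvPolynomial.eval y (MvPolynomial.monomial β (1 : K))) =
        if α = β then 1 else 0)
    -- the polynomial `f` and the Gröbner basis `U` of `I(X)`
    (f : MvPolynomial (Fin n) K)
    (U : Finset (MvPolynomial (Fin n) K))
    (hUspan : Ideal.span (U : Set (MvPolynomial (Fin n) K)) =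
      vanishingIdeal K n (Set.range x))
    (hULT : ∀ g' ∈ vanishingIdeal K n (Set.range x), g' ≠ 0 →
      ∃ g ∈ U, g ≠ 0 ∧ leadingMonomial mo g ≤ leadingMonomial mo g')
    -- the orthogonal solution `v*` of `Φ_X(g) = b` with `b_i = f(x_i)`
    (v : (Fin n → K) → K)
    (hsol : ∀ i : Fin m, v (x i) = MvPolynomial.eval (x i) f)
    (horth : ∀ u ∈ LinearMap.ker (LinearMap.pi
        (fun i : Fin m => LinearMap.proj (x i)) :
        ((Fin n → K) → K) →ₗ[K] (Fin m → K)), B u v = 0)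
    -- the normal form `r = f̄^U` of `f` with respect to `U`
    (r : MvPolynomial (Fin n) K)
    (hr₁ : f - r ∈ vanishingIdeal K n (Set.range x))
    (hr₂ : ∀ d ∈ r.support, ∀ g ∈ U, g ≠ 0 → ¬ leadingMonomial mo g ≤ d) :
    (fun y : Fin n → K => MvPolynomial.eval y r) = v ∧
      ∀ d ∈ r.support, ∀ i : Fin n, d i < Fintype.card K := by

  classical
  have hq2 : 1 < Fintype.card K := Fintype.one_lt_card
  -- membership of leading monomial in support
  have hlm_mem : ∀ g : MvPolynomial (Fin n) K, g ≠ 0 →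
      leadingMonomial mo g ∈ g.support := by
    intro g hg
    obtain ⟨a, ha, hae⟩ := Finset.exists_mem_eq_sup g.support
      (MvPolynomial.support_nonempty.mpr hg) mo.toSyn
    have : leadingMonomial mo g = a := by
      rw [leadingMonomial, hae]; exact mo.toSyn.symm_apply_apply a
    rwa [this]
  -- p j vanishes on X and is nonzero
  have hpker : ∀ j, (fun y => MvPolynomial.eval y (p j)) ∈
      LinearMap.ker (LinearMap.pi (fun i : Fin m => LinearMap.proj (x i)) :
        ((Fin n → K) → K) →ₗ[K] (Fin m → K)) := by
    intro j
    rw [← hspan]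
    exact Submodule.subset_span ⟨j, rfl⟩
  have hpvanish : ∀ j, ∀ i : Fin m, MvPolynomial.eval (x i) (p j) = 0 := by
    intro j i
    have h := hpker j
    rw [LinearMap.mem_ker] at h
    exact congrFun h i
  have hpne : ∀ j, p j ≠ 0 := by
    intro j h
    refine hindep.ne_zero j ?_
    funext y; simp [h]
  have hpI : ∀ j, p j ∈ vanishingIdeal K n (Set.range x) := by
    intro j y hy
    obtain ⟨i, rfl⟩ := hy
    exact hpvanish j i
  -- exponents of r are < q
  have key_div : ∀ d ∈ r.support, ∀ i : Fin n, d i < Fintype.card K := by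
    intro d hd i
    by_contra hdi
    push_neg at hdi
    set g' : MvPolynomial (Fin n) K :=
      MvPolynomial.X i ^ Fintype.card K - MvPolynomial.X i with hg'
    have hg'van : g' ∈ vanishingIdeal K n (Set.range x) := by
      intro y hy
      simp [hg', FiniteField.pow_card]
    have hg'ne : g' ≠ 0 := by
      intro h
      have hc : MvPolynomial.coeff (Finsupp.single i (Fintype.card K)) g' = 0 := by
        rw [h]; simp
      rw [hg', MvPolynomial.coeff_sub, MvPolynomial.coeff_X_pow] at hc
      have hne : Finsupp.single i (Fintype.card K) ≠ Finsupp.single i 1 := by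
        intro h'
        have := Finsupp.single_injective i h'
        omega
      rw [MvPolynomial.coeff_X', if_neg (Ne.symm hne)] at hc
      simp at hc
    have hsupp : g'.support ⊆ {Finsupp.single i (Fintype.card K), Finsupp.single i 1} := by
      intro a ha
      have h1 := MvPolynomial.support_sub (Fin n)
        (MvPolynomial.X i ^ Fintype.card K) (MvPolynomial.X i) ha
      rw [MvPolynomial.support_X_pow, MvPolynomial.support_X] at h1
      simpa using h1
    have hlm : leadingMonomial mo g' ≤ Finsupp.single i (Fintype.card K) := by
      have hmem := hsupp (hlm_mem g' hg'ne)
      simp only [Finset.mem_insert, Finset.mem_singleton] at hmem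
      rcases hmem with h | h
      · rw [h]
      · rw [h]
        exact Finsupp.single_le_single.mpr (le_of_lt hq2)
    obtain ⟨g, hgU, hgne, hgle⟩ := hULT g' hg'van hg'ne
    refine hr₂ d hd g hgU hgne (le_trans hgle (le_trans hlm ?_))
    exact (Finsupp.single_le_iff).mpr hdi
  -- exponents of r differ from all leading monomials of the p j
  have key_ne : ∀ d ∈ r.support, ∀ j, d ≠ leadingMonomial mo (p j) := by
    intro d hd j hdj
    obtain ⟨g, hgU, hgne, hgle⟩ := hULT (p j) (hpI j) (hpne j)
    exact hr₂ d hd g hgU hgne (hdj ▸ hgle)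
  -- the function of r as a sum of monomial functions
  have hφr : (fun y : Fin n → K => MvPolynomial.eval y r) =
      ∑ d ∈ r.support, MvPolynomial.coeff d r •
        (fun y : Fin n → K => MvPolynomial.eval y (MvPolynomial.monomial d (1 : K))) := by
    funext y
    rw [Finset.sum_apply]
    rw [MvPolynomial.eval_eq]
    apply Finset.sum_congr rfl
    intro d _
    simp [MvPolynomial.eval_monomial, Finsupp.prod]
  have hBpr : ∀ k, B (fun y => MvPolynomial.eval y (p k))
      (fun y => MvPolynomial.eval y r) = 0 := by
    intro k
    rw [hφr, map_sum]
    apply Finset.sum_eq_zero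
    intro d hd
    rw [LinearMap.map_smul, hB₂ k d (key_div d hd) (key_ne d hd), smul_zero]
  -- φ(r) - v lies in the kernel
  have hker : (fun y : Fin n → K => MvPolynomial.eval y r) - v ∈
      LinearMap.ker (LinearMap.pi (fun i : Fin m => LinearMap.proj (x i)) :
        ((Fin n → K) → K) →ₗ[K] (Fin m → K)) := by
    rw [LinearMap.mem_ker]
    funext i
    have h1 : (LinearMap.pi (fun i : Fin m => LinearMap.proj (x i)) :
        ((Fin n → K) → K) →ₗ[K] (Fin m → K))
        ((fun y : Fin n → K => MvPolynomial.eval y r) - v) i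
        = MvPolynomial.eval (x i) r - v (x i) := rfl
    rw [h1, hsol i]
    have h2 := hr₁ (x i) ⟨i, rfl⟩
    rw [map_sub] at h2
    simp only [Pi.zero_apply]
    rw [sub_eq_zero]
    exact (sub_eq_zero.mp h2).symm
  rw [← hspan, Submodule.mem_span_range_iff_exists_fun] at hker
  obtain ⟨c, hc⟩ := hker
  have hc0 : ∀ k, c k = 0 := by
    intro k
    have h1 := congrArg (B (fun y => MvPolynomial.eval y (p k))) hc
    rw [map_sum, map_sub] at h1
    simp only [LinearMap.map_smul, hB₁, smul_eq_mul, mul_ite, mul_one, mul_zero] at h1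
    rw [Finset.sum_ite_eq Finset.univ k c] at h1
    simp only [Finset.mem_univ, if_true] at h1
    rw [hBpr k, horth _ (hpker k), sub_zero] at h1
    exact h1
  have hzero : (fun y : Fin n → K => MvPolynomial.eval y r) - v = 0 := by
    rw [← hc]
    apply Finset.sum_eq_zero
    intro j _
    rw [hc0 j, zero_smul]
  exact ⟨sub_eq_zero.mp hzero, key_div⟩
end
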